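/- arXiv:2003.06880 — 4 statements merged into one kernel-verified Lean document; each statement's English description precedes it below -/
import Mathlib

section
/- The class of context-free spanners is closed under projection: if S is a context-free spanner associated with variable set X and X' ⊆ X, then the spanner π_{X'}S, defined by π_{X'}S(d) = { μ restricted to X' : μ ∈ S(d) }, is a context-free spanner. -/
/-!
Erasing the operations on variables outside `X'` is a homomorphism of ref-words, and it maps a
valid ref-word inducing `μ` to a valid ref-word inducing the restriction of `μ` to `X'`. Homomorphic
images of context-free languages are context-free, but an invalid ref-word may become valid after
erasure, so the grammar's language is first intersected with the regular language of valid
ref-words (Bar-Hillel's triple construction, combined with the homomorphism). That language is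
regular because `X` is finite as soon as the spanner is nonempty, and an empty spanner is
context-free anyway.
-/

/-- A variable operation: `(x, true)` is `⊢x` (open), `(x, false)` is `⊣x` (close). -/
abbrev VarOp (X : Type) : Type := X × Bool

/-- A ref-word: a word over the extended alphabet `Σ ∪ Γ_X`. -/
abbrev RefWord (T X : Type) : Type := List (T ⊕ VarOp X)

/-- The morphism `clr` erasing variable operations and fixing letters of `Σ`. -/
def clr {T X : Type} (r : RefWord T X) : List T :=
  r.filterMap (fun a => match a with | Sum.inl t => some t | Sum.inr _ => none)

/-- A ref-word is valid for `X`: each `⊢x` and `⊣x` occurs exactly once, `⊢x` before `⊣x`. -/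
def ValidRef {T X : Type} (r : RefWord T X) : Prop :=
  ∀ x : X, ∃ u v w : RefWord T X,
    r = u ++ Sum.inr (x, true) :: (v ++ Sum.inr (x, false) :: w) ∧
    ∀ b : Bool, Sum.inr (x, b) ∉ u ∧ Sum.inr (x, b) ∉ v ∧ Sum.inr (x, b) ∉ w

/-- `μ` is the `(X,d)`-mapping `μ^r` induced by the ref-word `r`. -/
def MappingOf {T X : Type} (r : RefWord T X) (μ : X → ℕ × ℕ) : Prop :=
  ∀ x : X, ∃ u v w : RefWord T X,
    r = u ++ Sum.inr (x, true) :: (v ++ Sum.inr (x, false) :: w) ∧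
    μ x = ((clr u).length + 1, (clr u).length + 1 + (clr v).length)

/-- The spanner defined by an extraction grammar (a CFG over `Σ ∪ Γ_X`). -/
def spanner {T X : Type} (G : ContextFreeGrammar (T ⊕ VarOp X)) (d : List T) :
    Set (X → ℕ × ℕ) :=
  {μ | ∃ r : RefWord T X, r ∈ G.language ∧ ValidRef r ∧ clr r = d ∧ MappingOf r μ}

/-- A spanner is context-free if it is definable by an extraction grammar. -/
def IsCFSpanner {T X : Type} (S : List T → Set (X → ℕ × ℕ)) : Prop :=
  ∃ G : ContextFreeGrammar.{0} (T ⊕ VarOp X), ∀ d : List T, S d = spanner G d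

theorem ContextFreeRule.Rewrites.eq_output_of_singleton {T N : Type*} {r : ContextFreeRule T N}
    {n : N} {v : List (Symbol T N)} (hr : r.Rewrites [.nonterminal n] v) :
    r.input = n ∧ v = r.output := by
  rcases hr with _ | ⟨_, ⟨⟩⟩
  simp

namespace ContextFreeGrammar

variable {T T' : Type*} {σ : Type} (G : ContextFreeGrammar T) (M : DFA T σ) (h : T → List T')

/-- `DFALift G M h q s f s'`: the sentential form `s'` arises from `s` by replacing each terminal
`a` by `h a` and annotating each nonterminal with the states of `M` before and after it, along a
run of `M` from `q` to `f` that reads the terminals of `s`. -/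
inductive DFALift : σ → List (Symbol T G.NT) → σ → List (Symbol T' (Option (G.NT × σ × σ))) → Prop
  | nil (q : σ) : DFALift q [] q []
  | terminal {q f : σ} {s s'} (a : T) (hs : DFALift (M.step q a) s f s') :
      DFALift q (.terminal a :: s) f ((h a).map .terminal ++ s')
  | nonterminal {q q' f : σ} {s s'} (B : G.NT) (hs : DFALift q' s f s') :
      DFALift q (.nonterminal B :: s) f (.nonterminal (some (B, q, q')) :: s')

open Classical in
noncomputable def dfaLifts [Fintype σ] :
    List (Symbol T G.NT) → σ → Finset (List (Symbol T' (Option (G.NT × σ × σ))) × σ)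
  | [], q => {([], q)}
  | .terminal a :: s, q =>
    (dfaLifts s (M.step q a)).image fun p => ((h a).map .terminal ++ p.1, p.2)
  | .nonterminal B :: s, q =>
    Finset.univ.biUnion fun q' =>
      (dfaLifts s q').image fun p => (.nonterminal (some (B, q, q')) :: p.1, p.2)

variable {G M h}

theorem mem_dfaLifts [Fintype σ] {s : List (Symbol T G.NT)} {q : σ} {p} :
    p ∈ dfaLifts G M h s q ↔ DFALift G M h q s p.2 p.1 := by
  obtain ⟨o, f⟩ := p
  induction s generalizing q o f with
  | nil =>
    constructor
    · intro hp
      obtain ⟨rfl, rfl⟩ : o = [] ∧ f = q := by simpa [dfaLifts] using hp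
      exact .nil _
    · rintro ⟨⟩
      simp [dfaLifts]
  | cons a s ih =>
    cases a with
    | terminal a =>
      simp only [dfaLifts, Finset.mem_image, ih, Prod.exists, Prod.mk.injEq]
      constructor
      · rintro ⟨o', f', hl, rfl, rfl⟩
        exact .terminal a hl
      · rintro (_ | ⟨a, hl⟩)
        exact ⟨_, _, hl, rfl, rfl⟩
    | nonterminal B =>
      simp only [dfaLifts, Finset.mem_biUnion, Finset.mem_univ, true_and, Finset.mem_image, ih,
        Prod.exists, Prod.mk.injEq]
      constructor
      · rintro ⟨q', o', f', hl, rfl, rfl⟩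
        exact .nonterminal B hl
      · rintro (_ | _ | ⟨B, hl⟩)
        exact ⟨_, _, _, hl, rfl, rfl⟩

variable (G M h) in
open Classical in
/-- A nonterminal `some (B, p, q)` derives the `h`-images of the words derivable from `B` that lead
`M` from `p` to `q`; the new initial symbol `none` picks an accepting final state. -/
noncomputable def mapInterDFA [Fintype σ] : ContextFreeGrammar T' where
  NT := Option (G.NT × σ × σ)
  initial := none
  rules :=
    ({f | f ∈ M.accept} : Finset σ).image
        (fun f => ⟨none, [.nonterminal (some (G.initial, M.start, f))]⟩) ∪
      G.rules.biUnion fun r => Finset.univ.biUnion fun q =>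
        (dfaLifts G M h r.output q).image fun p => ⟨some (r.input, q, p.2), p.1⟩

theorem mem_mapInterDFA_rules [Fintype σ] {r' : ContextFreeRule T' (Option (G.NT × σ × σ))} :
    r' ∈ (mapInterDFA G M h).rules ↔
      (∃ f ∈ M.accept, r' = ⟨none, [.nonterminal (some (G.initial, M.start, f))]⟩) ∨
        ∃ r ∈ G.rules, ∃ q f o, DFALift G M h q r.output f o ∧ r' = ⟨some (r.input, q, f), o⟩ := by
  unfold mapInterDFA
  simp only [Finset.mem_union, Finset.mem_image, Finset.mem_filter, Finset.mem_univ,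
    true_and, Finset.mem_biUnion, mem_dfaLifts, Prod.exists]
  refine or_congr (by simp only [eq_comm]) ⟨?_, ?_⟩
  · rintro ⟨r, hr, q, o, f, hl, rfl⟩
    exact ⟨r, hr, q, f, o, hl, rfl⟩
  · rintro ⟨r, hr, q, f, o, hl, rfl⟩
    exact ⟨r, hr, q, o, f, hl, rfl⟩

theorem DFALift.append {q m f : σ} {s₁ s₂ s₁' s₂'} (h₁ : DFALift G M h q s₁ m s₁')
    (h₂ : DFALift G M h m s₂ f s₂') : DFALift G M h q (s₁ ++ s₂) f (s₁' ++ s₂') := by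
  induction h₁ with
  | nil => exact h₂
  | terminal a _ ih => simpa using DFALift.terminal a (ih h₂)
  | nonterminal B _ ih => exact .nonterminal B (ih h₂)

theorem DFALift.of_append {q f : σ} {s₁ s₂ s'} (hl : DFALift G M h q (s₁ ++ s₂) f s') :
    ∃ m s₁' s₂', s' = s₁' ++ s₂' ∧ DFALift G M h q s₁ m s₁' ∧ DFALift G M h m s₂ f s₂' := by
  induction s₁ generalizing q s' with
  | nil => exact ⟨q, [], s', rfl, .nil q, hl⟩
  | cons a s₁ ih =>
    cases hl with
    | terminal a hs =>
      obtain ⟨m, s₁', s₂', rfl, hl₁, hl₂⟩ := ih hs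
      exact ⟨m, _ ++ s₁', s₂', (List.append_assoc _ _ _).symm, .terminal a hl₁, hl₂⟩
    | nonterminal B hs =>
      obtain ⟨m, s₁', s₂', rfl, hl₁, hl₂⟩ := ih hs
      exact ⟨m, _ :: s₁', s₂', rfl, .nonterminal B hl₁, hl₂⟩

theorem DFALift.of_eq_nonterminal {q f : σ} {s p' r'} {N : Option (G.NT × σ × σ)}
    (hl : DFALift G M h q s f (p' ++ .nonterminal N :: r')) :
    ∃ s₁ B s₂ q₁ q₂, s = s₁ ++ .nonterminal B :: s₂ ∧ N = some (B, q₁, q₂) ∧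
      DFALift G M h q s₁ q₁ p' ∧ DFALift G M h q₂ s₂ f r' := by
  generalize hs' : p' ++ Symbol.nonterminal N :: r' = s' at hl
  induction hl generalizing p' with
  | nil => simp at hs'
  | @terminal q f s s' a _ ih =>
    obtain ⟨p'', rfl, hs⟩ : ∃ p'', p' = (h a).map Symbol.terminal ++ p'' ∧
        p'' ++ Symbol.nonterminal N :: r' = s' := by
      rcases List.append_eq_append_iff.mp hs' with ⟨c', hc', hr⟩ | ⟨p'', rfl, hs⟩
      · cases c' with
        | nil => exact ⟨[], by simpa using hc'.symm, by simpa using hr⟩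
        | cons c c' =>
          have hN : Symbol.nonterminal N ∈ (h a).map Symbol.terminal := by
            simp [hc', (List.cons.inj hr).1]
          simp at hN
      · exact ⟨p'', rfl, hs.symm⟩
    obtain ⟨s₁, B, s₂, q₁, q₂, rfl, rfl, hl₁, hl₂⟩ := ih hs
    exact ⟨_ :: s₁, B, s₂, q₁, q₂, rfl, rfl, .terminal a hl₁, hl₂⟩
  | @nonterminal q q' f s s' B hs ih =>
    cases p' with
    | nil =>
      obtain ⟨hN, rfl⟩ := List.cons.inj hs'
      exact ⟨[], B, s, q, q', rfl, Symbol.nonterminal.inj hN, .nil q, hs⟩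
    | cons c p'' =>
      obtain ⟨rfl, htail⟩ := List.cons.inj hs'
      obtain ⟨s₁, B', s₂, q₁, q₂, rfl, rfl, hl₁, hl₂⟩ := ih htail
      exact ⟨_ :: s₁, B', s₂, q₁, q₂, rfl, rfl, .nonterminal B hl₁, hl₂⟩

theorem dfaLift_map_terminal (w : List T) (q : σ) :
    DFALift G M h q (w.map .terminal) (M.evalFrom q w) ((w.flatMap h).map .terminal) := by
  induction w generalizing q with
  | nil => exact .nil q
  | cons a w ih => simpa using DFALift.terminal a (ih _)

theorem DFALift.exists_eq_map_terminal {q f : σ} {s} {w' : List T'}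
    (hl : DFALift G M h q s f (w'.map .terminal)) :
    ∃ w, s = w.map .terminal ∧ M.evalFrom q w = f ∧ w.flatMap h = w' := by
  generalize hs' : w'.map Symbol.terminal = s' at hl
  induction hl generalizing w' with
  | nil q => exact ⟨[], rfl, rfl, by simpa using hs'⟩
  | terminal a _ ih =>
    obtain ⟨w₁', w₂', rfl, hw₁, hw₂⟩ := List.map_eq_append_iff.mp hs'
    obtain ⟨w, rfl, rfl, rfl⟩ := ih hw₂
    refine ⟨a :: w, rfl, rfl, ?_⟩
    rw [List.flatMap_cons, List.map_injective_iff.mpr (fun _ _ h => Symbol.terminal.inj h) hw₁]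
  | nonterminal B _ ih =>
    cases w' <;> simp at hs'

theorem Produces.mapInterDFA_of_dfaLift [Fintype σ] {s t} (hst : G.Produces s t) {q f : σ} {t'}
    (hl : DFALift G M h q t f t') :
    ∃ s', DFALift G M h q s f s' ∧ (mapInterDFA G M h).Produces s' t' := by
  obtain ⟨r, hr, hrw⟩ := hst
  obtain ⟨p, u, rfl, rfl⟩ := hrw.exists_parts
  obtain ⟨m₁, p', rest, rfl, hp, hrest⟩ :=
    DFALift.of_append (by simpa only [List.append_assoc] using hl)
  obtain ⟨m₂, o', u', rfl, ho, hu⟩ := DFALift.of_append hrest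
  refine ⟨p' ++ [.nonterminal (some (r.input, m₁, m₂))] ++ u', ?_,
    ⟨_, mem_mapInterDFA_rules.mpr (.inr ⟨r, hr, m₁, m₂, o', ho, rfl⟩), ?_⟩⟩
  · simpa using hp.append (.nonterminal r.input hu)
  · rw [← List.append_assoc]
    exact ContextFreeRule.rewrites_of_exists_parts _ p' u'

theorem Derives.mapInterDFA_of_dfaLift [Fintype σ] {s t} (hst : G.Derives s t) {q f : σ} {t'}
    (hl : DFALift G M h q t f t') :
    ∃ s', DFALift G M h q s f s' ∧ (mapInterDFA G M h).Derives s' t' := by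
  induction hst using Relation.ReflTransGen.head_induction_on with
  | refl => exact ⟨t', hl, Relation.ReflTransGen.refl⟩
  | head hstep _ ih =>
    obtain ⟨c', hc', hder⟩ := ih
    obtain ⟨s', hs', hprod⟩ := hstep.mapInterDFA_of_dfaLift hc'
    exact ⟨s', hs', hprod.trans_derives hder⟩

theorem Produces.of_mapInterDFA [Fintype σ] {s' t'} (hst : (mapInterDFA G M h).Produces s' t')
    {q f : σ} {s} (hl : DFALift G M h q s f s') :
    ∃ t, DFALift G M h q t f t' ∧ G.Produces s t := by
  obtain ⟨r', hr', hrw⟩ := hst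
  obtain ⟨p', u', rfl, rfl⟩ := hrw.exists_parts
  rw [List.append_assoc, List.singleton_append] at hl
  obtain ⟨s₁, B, s₂, q₁, q₂, rfl, hN, hl₁, hl₂⟩ := DFALift.of_eq_nonterminal hl
  rcases mem_mapInterDFA_rules.mp hr' with ⟨f, -, rfl⟩ | ⟨r, hr, q₁', q₂', o, ho, rfl⟩
  · cases hN
  · obtain ⟨rfl, rfl, rfl⟩ : r.input = B ∧ q₁' = q₁ ∧ q₂' = q₂ := by simpa using hN
    refine ⟨s₁ ++ r.output ++ s₂, ?_, r, hr, ?_⟩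
    · rw [List.append_assoc, List.append_assoc]
      exact hl₁.append (ho.append hl₂)
    simpa using r.rewrites_of_exists_parts s₁ s₂

theorem Derives.of_mapInterDFA [Fintype σ] {s' t'} (hst : (mapInterDFA G M h).Derives s' t')
    {q f : σ} {s} (hl : DFALift G M h q s f s') :
    ∃ t, DFALift G M h q t f t' ∧ G.Derives s t := by
  induction hst with
  | refl => exact ⟨s, hl, .refl _⟩
  | tail _ hstep ih =>
    obtain ⟨t, ht, hder⟩ := ih
    obtain ⟨u, hu, hprod⟩ := hstep.of_mapInterDFA ht
    exact ⟨u, hu, hder.trans_produces hprod⟩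

theorem mem_mapInterDFA_language [Fintype σ] {w' : List T'} :
    w' ∈ (mapInterDFA G M h).language ↔ ∃ w ∈ G.language, w ∈ M.accepts ∧ w.flatMap h = w' := by
  constructor
  · intro hw
    obtain ⟨u, ⟨r', hr', hrw⟩, hder⟩ :=
      ((mem_language_iff _ _).mp hw).eq_or_head.resolve_left (by cases w' <;> simp)
    rcases mem_mapInterDFA_rules.mp hr' with ⟨f, hf, rfl⟩ | ⟨r, -, q, f, o, -, rfl⟩
    · obtain ⟨-, rfl⟩ := hrw.eq_output_of_singleton
      obtain ⟨t, ht, hder'⟩ := hder.of_mapInterDFA (.nonterminal G.initial (.nil f))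
      obtain ⟨w, rfl, hwf, rfl⟩ := ht.exists_eq_map_terminal
      refine ⟨w, (mem_language_iff _ _).mpr hder', ?_, rfl⟩
      rwa [DFA.mem_accepts, DFA.eval, hwf]
    · cases hrw.eq_output_of_singleton.1
  · rintro ⟨w, hw, hacc, rfl⟩
    obtain ⟨s', hs', hder⟩ :=
      ((mem_language_iff _ _).mp hw).mapInterDFA_of_dfaLift (dfaLift_map_terminal w M.start)
    rcases hs' with _ | _ | ⟨_, ⟨⟩⟩
    refine (mem_language_iff _ _).mpr (Produces.trans_derives ?_ hder)
    exact ⟨_, mem_mapInterDFA_rules.mpr (.inl ⟨_, hacc, rfl⟩), .input_output⟩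

end ContextFreeGrammar

section Projection

variable {T X : Type} (X' : Set X) [DecidablePred (· ∈ X')]

def projectLetter : T ⊕ VarOp X → RefWord T X'
  | .inl t => [.inl t]
  | .inr (x, b) => if hx : x ∈ X' then [.inr (⟨x, hx⟩, b)] else []

variable {X'}

theorem clr_flatMap_projectLetter (r : RefWord T X) :
    clr (r.flatMap (projectLetter X')) = clr r := by
  induction r with
  | nil => rfl
  | cons a r ih =>
    rcases a with t | ⟨x, b⟩
    · simpa [clr, projectLetter] using ih
    · by_cases hx : x ∈ X' <;> simpa [clr, projectLetter, hx] using ih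

theorem mem_flatMap_projectLetter {r : RefWord T X} {x : X} (hx : x ∈ X') {b : Bool} :
    .inr (⟨x, hx⟩, b) ∈ r.flatMap (projectLetter X') ↔ .inr (x, b) ∈ r := by
  simp only [List.mem_flatMap]
  constructor
  · rintro ⟨a, ha, hmem⟩
    rcases a with t | ⟨z, c⟩
    · simp [projectLetter] at hmem
    · by_cases hz : z ∈ X'
      · simp only [projectLetter, hz, dite_true, List.mem_singleton, Sum.inr.injEq, Prod.mk.injEq,
          Subtype.mk.injEq] at hmem
        obtain ⟨rfl, rfl⟩ := hmem
        exact ha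
      · simp [projectLetter, hz] at hmem
  · intro h
    exact ⟨_, h, by simp [projectLetter, hx]⟩

theorem flatMap_projectLetter_split {x : X} (hx : x ∈ X') (u v w : RefWord T X) :
    (u ++ .inr (x, true) :: (v ++ .inr (x, false) :: w)).flatMap (projectLetter X') =
      u.flatMap (projectLetter X') ++ .inr (⟨x, hx⟩, true) ::
        (v.flatMap (projectLetter X') ++ .inr (⟨x, hx⟩, false) :: w.flatMap (projectLetter X')) := by
  simp [projectLetter, hx]

theorem ValidRef.flatMap_projectLetter {r : RefWord T X} (hr : ValidRef r) :
    ValidRef (r.flatMap (projectLetter X')) := by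
  rintro ⟨x, hx⟩
  obtain ⟨u, v, w, rfl, hfree⟩ := hr x
  refine ⟨_, _, _, flatMap_projectLetter_split hx u v w, fun b => ?_⟩
  simp only [mem_flatMap_projectLetter]
  exact hfree b

theorem MappingOf.flatMap_projectLetter {r : RefWord T X} {μ : X → ℕ × ℕ} (hr : MappingOf r μ) :
    MappingOf (r.flatMap (projectLetter X')) (fun x => μ x.1) := by
  rintro ⟨x, hx⟩
  obtain ⟨u, v, w, rfl, hμ⟩ := hr x
  refine ⟨_, _, _, flatMap_projectLetter_split hx u v w, ?_⟩
  simpa only [clr_flatMap_projectLetter] using hμ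

end Projection

section Mapping

variable {T X : Type}

theorem ValidRef.exists_mappingOf {r : RefWord T X} (hr : ValidRef r) : ∃ μ, MappingOf r μ := by
  choose u v w hsplit _ using hr
  exact ⟨_, fun x => ⟨u x, v x, w x, hsplit x, rfl⟩⟩

theorem MappingOf.apply_eq {r : RefWord T X} {μ : X → ℕ × ℕ} (hμ : MappingOf r μ) {x : X}
    {u v w : RefWord T X} (hsplit : r = u ++ .inr (x, true) :: (v ++ .inr (x, false) :: w))
    (hfree : ∀ b : Bool, .inr (x, b) ∉ u ∧ .inr (x, b) ∉ v ∧ .inr (x, b) ∉ w) :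
    μ x = ((clr u).length + 1, (clr u).length + 1 + (clr v).length) := by
  obtain ⟨u₁, v₁, w₁, hsplit₁, hμx⟩ := hμ x
  rw [hsplit] at hsplit₁
  obtain ⟨rfl, -, htail⟩ := (List.append_cons_inj_of_notMem (hfree true).1
    (by simp [(hfree true).2.1, (hfree true).2.2])).mp hsplit₁
  obtain ⟨rfl, -⟩ := (List.append_cons_inj_of_notMem (hfree false).2.1 (hfree false).2.2).mp htail
  exact hμx

theorem MappingOf.unique {r : RefWord T X} (hr : ValidRef r) {μ₁ μ₂ : X → ℕ × ℕ}
    (h₁ : MappingOf r μ₁) (h₂ : MappingOf r μ₂) : μ₁ = μ₂ := by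
  funext x
  obtain ⟨u, v, w, hsplit, hfree⟩ := hr x
  rw [h₁.apply_eq hsplit hfree, h₂.apply_eq hsplit hfree]

theorem ValidRef.finite {r : RefWord T X} (hr : ValidRef r) : Finite X := by
  have hinj : Function.Injective fun x : X => (.inr (x, true) : T ⊕ VarOp X) := by
    intro x y hxy
    simpa using hxy
  refine (Set.finite_range_iff hinj).mp (r.finite_toSet.subset ?_)
  rintro _ ⟨x, rfl⟩
  obtain ⟨u, v, w, rfl, -⟩ := hr x
  simp

end Mapping

section ValidityDFA

def markerStep : Fin 4 → Bool → Fin 4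
  | 0, true => 1
  | 1, false => 2
  | _, _ => 3

theorem foldl_markerStep_three (bs : List Bool) : bs.foldl markerStep 3 = 3 := by
  induction bs with
  | nil => rfl
  | cons b bs ih => cases b <;> exact ih

theorem foldl_markerStep_eq_two_iff {bs : List Bool} :
    bs.foldl markerStep 0 = 2 ↔ bs = [true, false] := by
  rcases bs with _ | ⟨_ | _, _ | ⟨_ | _, _ | ⟨b, bs⟩⟩⟩ <;>
    simp [markerStep, foldl_markerStep_three]

variable {T X : Type} [DecidableEq X]

def varOpOf (x : X) : T ⊕ VarOp X → Option Bool
  | .inl _ => none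
  | .inr (z, b) => if z = x then some b else none

theorem varOpOf_eq_some {x : X} {a : T ⊕ VarOp X} {b : Bool} :
    varOpOf x a = some b ↔ a = .inr (x, b) := by
  rcases a with t | ⟨z, c⟩ <;> simp only [varOpOf] <;> grind

theorem filterMap_varOpOf_eq_nil_iff {x : X} {u : RefWord T X} :
    u.filterMap (varOpOf x) = [] ↔ ∀ b : Bool, .inr (x, b) ∉ u := by
  simp only [List.filterMap_eq_nil_iff, Option.eq_none_iff_forall_ne_some, ne_eq, varOpOf_eq_some]
  exact ⟨fun h b hb => h _ hb b rfl, fun h a ha b hab => h b (hab ▸ ha)⟩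

theorem validRef_iff_filterMap_varOpOf {r : RefWord T X} :
    ValidRef r ↔ ∀ x, r.filterMap (varOpOf x) = [true, false] := by
  refine forall_congr' fun x => ⟨?_, fun h => ?_⟩
  · rintro ⟨u, v, w, rfl, hfree⟩
    simp [List.filterMap_append, varOpOf, filterMap_varOpOf_eq_nil_iff.mpr, hfree]
  · obtain ⟨u, _, l, rfl, hu, ha, hl⟩ := List.filterMap_eq_cons_iff.mp h
    obtain ⟨v, _, w, rfl, hv, ha', hw⟩ := List.filterMap_eq_cons_iff.mp hl
    rw [varOpOf_eq_some] at ha ha'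
    subst ha ha'
    refine ⟨u, v, w, rfl, fun b => ⟨?_, ?_, ?_⟩⟩
    · exact filterMap_varOpOf_eq_nil_iff.mp (List.filterMap_eq_nil_iff.mpr hu) b
    · exact filterMap_varOpOf_eq_nil_iff.mp (List.filterMap_eq_nil_iff.mpr hv) b
    · exact filterMap_varOpOf_eq_nil_iff.mp hw b

/-- Coordinate `x` of the state is `0`, `1` or `2` after reading no marker of `x`, exactly `⊢x`,
or `⊢x` followed by `⊣x`; `3` is the error state. -/
def validRefDFA : DFA (T ⊕ VarOp X) (X → Fin 4) where
  step q
    | .inl _ => q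
    | .inr (x, b) => Function.update q x (markerStep (q x) b)
  start := fun _ => 0
  accept := {fun _ => 2}

theorem validRefDFA_evalFrom_apply (q : X → Fin 4) (r : RefWord T X) (x : X) :
    validRefDFA.evalFrom q r x = (r.filterMap (varOpOf x)).foldl markerStep (q x) := by
  induction r generalizing q with
  | nil => rfl
  | cons a r ih =>
    rw [DFA.evalFrom_cons, ih]
    rcases a with t | ⟨z, b⟩
    · rfl
    · by_cases hz : z = x
      · subst hz
        simp [validRefDFA, varOpOf]
      · simp [validRefDFA, varOpOf, hz, Function.update_of_ne (Ne.symm hz)]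

theorem mem_validRefDFA_accepts {r : RefWord T X} : r ∈ validRefDFA.accepts ↔ ValidRef r := by
  rw [validRef_iff_filterMap_varOpOf, DFA.mem_accepts, DFA.eval]
  simp only [← foldl_markerStep_eq_two_iff]
  exact funext_iff.trans (forall_congr' fun x => by rw [validRefDFA_evalFrom_apply]; rfl)

end ValidityDFA

theorem spanner_mapInterDFA_projectLetter {T X : Type} [Fintype X] [DecidableEq X] (X' : Set X)
    [DecidablePred (· ∈ X')] (G : ContextFreeGrammar (T ⊕ VarOp X)) (d : List T) :
    spanner (G.mapInterDFA validRefDFA (projectLetter X')) d =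
      {ν | ∃ μ ∈ spanner G d, ν = fun x => μ x.1} := by
  ext ν
  constructor
  · rintro ⟨r', hr', hvalid', rfl, hν⟩
    obtain ⟨r, hr, hacc, rfl⟩ := ContextFreeGrammar.mem_mapInterDFA_language.mp hr'
    have hvalid := mem_validRefDFA_accepts.mp hacc
    obtain ⟨μ, hμ⟩ := hvalid.exists_mappingOf
    exact ⟨μ, ⟨r, hr, hvalid, (clr_flatMap_projectLetter r).symm, hμ⟩,
      hν.unique hvalid' hμ.flatMap_projectLetter⟩
  · rintro ⟨μ, ⟨r, hr, hvalid, rfl, hμ⟩, rfl⟩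
    exact ⟨_, ContextFreeGrammar.mem_mapInterDFA_language.mpr
        ⟨r, hr, mem_validRefDFA_accepts.mpr hvalid, rfl⟩,
      hvalid.flatMap_projectLetter, clr_flatMap_projectLetter r, hμ.flatMap_projectLetter⟩

theorem spanner_eq_empty_of_infinite {T X : Type} [Infinite X]
    (G : ContextFreeGrammar (T ⊕ VarOp X)) (d : List T) : spanner G d = ∅ :=
  Set.eq_empty_of_forall_notMem fun _ ⟨_, _, hr, _⟩ => not_finite_iff_infinite.mpr ‹_› hr.finite

theorem isCFSpanner_empty {T X : Type} : IsCFSpanner fun _ : List T => (∅ : Set (X → ℕ × ℕ)) := by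
  refine ⟨⟨Unit, (), ∅⟩, fun d => (Set.eq_empty_of_forall_notMem ?_).symm⟩
  rintro _ ⟨r, hr, -⟩
  rw [ContextFreeGrammar.language_eq_zero_of_forall_input_ne_initial (by simp)] at hr
  exact hr

/-- The class of context-free spanners is closed under projection: restricting every mapping of a
context-free spanner to a subset `X'` of its variables yields a context-free spanner. -/
theorem stmt5 (T X : Type) (X' : Set X) (S : List T → Set (X → ℕ × ℕ))
    (h : IsCFSpanner S) :
    IsCFSpanner (fun d => {ν : ↥X' → ℕ × ℕ | ∃ μ ∈ S d, ν = fun x => μ x.1}) := by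
  classical
  obtain ⟨G, hG⟩ := h
  obtain rfl : S = spanner G := funext hG
  cases finite_or_infinite X
  · have := Fintype.ofFinite X
    exact ⟨G.mapInterDFA validRefDFA (projectLetter X'),
      fun d => (spanner_mapInterDFA_projectLetter X' G d).symm⟩
  · convert isCFSpanner_empty with d
    simp [spanner_eq_empty_of_infinite]
end

section
/- For every extraction grammar G associated with k variables, there exists an equivalent functional extraction grammar G' (i.e., every ref-word generated by G' is valid, and G' defines the same spanner as G); moreover, if G is in Chomsky Normal Form then G' can be taken with at most 3^{2k}·|V| nonterminals, where V is the nonterminal set of G. -/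
/-- A grammar is in Chomsky Normal Form: every rule is `A → BC` or `A → a`. -/
def InCNF {U : Type} (G : ContextFreeGrammar U) : Prop :=
  ∀ r ∈ G.rules,
    (∃ B C : G.NT, r.output = [Symbol.nonterminal B, Symbol.nonterminal C]) ∨
    (∃ a : U, r.output = [Symbol.terminal a])

/-!
Validity of a ref-word is a regular property: reading the word left to right, it suffices to
remember for each variable whether it is still unopened, open, or closed, which is an automaton
with `3 ^ k` states. Intersecting `G` with it by the Bar-Hillel triple construction gives a
grammar whose nonterminals `(p, A, q)` derive exactly the words derived by `A` that drive the
automaton from state `p` to state `q`; there are `3 ^ k · |V| · 3 ^ k` of them. Soundness holds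
because, reading `(p, A, q)` as a transition from `p` to `q`, every derivation step preserves the
runs of the automaton on sentential forms. The new grammar generates exactly the valid ref-words
of `G`, so it is functional and defines the same spanner.
-/
namespace NFA

variable {α β σ : Type*}

theorem mem_evalFrom_singleton_nil {M : NFA α σ} {s t : σ} :
    t ∈ M.evalFrom {s} [] ↔ t = s := by
  rw [evalFrom_nil, Set.mem_singleton_iff]

theorem mem_evalFrom_singleton_cons {M : NFA α σ} {s t : σ} {a : α} {x : List α} :
    t ∈ M.evalFrom {s} (a :: x) ↔ ∃ m ∈ M.step s a, t ∈ M.evalFrom {m} x := by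
  rw [evalFrom_cons, stepSet_singleton, mem_evalFrom_iff_exists]

theorem mem_evalFrom_singleton_append {M : NFA α σ} {s t : σ} {x y : List α} :
    t ∈ M.evalFrom {s} (x ++ y) ↔ ∃ m ∈ M.evalFrom {s} x, t ∈ M.evalFrom {m} y := by
  rw [evalFrom_append, mem_evalFrom_iff_exists]

theorem evalFrom_empty (M : NFA α σ) (x : List α) : M.evalFrom ∅ x = ∅ := by
  induction x with
  | nil => rfl
  | cons a x ih => rw [evalFrom_cons, stepSet_empty, ih]

def pi {ι : Type*} {σ : ι → Type*} (M : ∀ i, NFA α (σ i)) : NFA α (∀ i, σ i) where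
  step q a := Set.univ.pi fun i => (M i).step (q i) a
  start := Set.univ.pi fun i => (M i).start
  accept := Set.univ.pi fun i => (M i).accept

theorem pi_step {ι : Type*} {σ : ι → Type*} (M : ∀ i, NFA α (σ i)) (q : ∀ i, σ i) (a : α) :
    (pi M).step q a = Set.univ.pi fun i => (M i).step (q i) a :=
  rfl

theorem mem_pi_evalFrom_singleton {ι : Type*} {σ : ι → Type*} {M : ∀ i, NFA α (σ i)}
    {q q' : ∀ i, σ i} {x : List α} :
    q' ∈ (pi M).evalFrom {q} x ↔ ∀ i, q' i ∈ (M i).evalFrom {q i} x := by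
  induction x generalizing q with
  | nil => simp only [mem_evalFrom_singleton_nil, funext_iff]
  | cons a x ih =>
    simp only [mem_evalFrom_singleton_cons, ih, pi_step, Set.mem_pi, Set.mem_univ, true_implies]
    exact ⟨fun ⟨m, hm, hx⟩ i => ⟨m i, hm i, hx i⟩, fun h => by
      choose m hm hx using h
      exact ⟨m, hm, hx⟩⟩

def comapOption (M : NFA β σ) (f : α → Option β) : NFA α σ where
  step s a := (f a).elim {s} (M.step s)
  start := M.start
  accept := M.accept

theorem comapOption_step (M : NFA β σ) (f : α → Option β) (s : σ) (a : α) :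
    (M.comapOption f).step s a = (f a).elim {s} (M.step s) :=
  rfl

theorem mem_comapOption_evalFrom_singleton {M : NFA β σ} {f : α → Option β} {s t : σ}
    {x : List α} : t ∈ (M.comapOption f).evalFrom {s} x ↔ t ∈ M.evalFrom {s} (x.filterMap f) := by
  induction x generalizing s with
  | nil => rfl
  | cons a x ih =>
    rw [mem_evalFrom_singleton_cons, List.filterMap_cons, comapOption_step]
    cases f a with
    | none => simp only [Option.elim_none, Set.mem_singleton_iff, exists_eq_left, ih]
    | some b => simp only [Option.elim_some, mem_evalFrom_singleton_cons, ih]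

end NFA

theorem List.finite_setOf_map_eq {α β : Type*} {f : α → β} (hf : ∀ b, (f ⁻¹' {b}).Finite)
    (l : List β) : {o : List α | o.map f = l}.Finite := by
  induction l with
  | nil => simp
  | cons b l ih =>
    refine ((hf b).image2 List.cons ih).subset ?_
    intro o ho
    obtain ⟨a, o', rfl, ha, ho'⟩ := List.map_eq_cons_iff.mp ho
    exact ⟨a, ha, o', ho', rfl⟩

section Triples

variable {α σ N : Type*}

def Symbol.eraseStates : Symbol α (σ × N × σ) → Symbol α N
  | .terminal a => .terminal a
  | .nonterminal (_, A, _) => .nonterminal A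

theorem Symbol.eraseStates_eq_nonterminal_iff {x : Symbol α (σ × N × σ)} {A : N} :
    x.eraseStates = .nonterminal A ↔ ∃ p q, x = .nonterminal (p, A, q) := by
  rcases x with a | ⟨p, B, q⟩ <;> simp [Symbol.eraseStates]

theorem Symbol.finite_eraseStates_preimage [Finite σ] (x : Symbol α N) :
    (Symbol.eraseStates ⁻¹' {x} : Set (Symbol α (σ × N × σ))).Finite := by
  cases x with
  | terminal a =>
    refine (Set.finite_singleton (Symbol.terminal a)).subset ?_
    rintro (b | ⟨p, B, q⟩) h <;> simp_all [Symbol.eraseStates]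
  | nonterminal A =>
    refine (Set.finite_range fun pq : σ × σ => Symbol.nonterminal (pq.1, A, pq.2)).subset ?_
    rintro (b | ⟨p, B, q⟩) h <;> simp_all [Symbol.eraseStates]

def NFA.onTriples (M : NFA α σ) (N : Type*) : NFA (Symbol α (σ × N × σ)) σ where
  step s
    | .terminal a => M.step s a
    | .nonterminal (p, _, q) => {t | s = p ∧ t = q}
  start := M.start
  accept := M.accept

theorem NFA.mem_onTriples_evalFrom_map_terminal {M : NFA α σ} {s t : σ} {w : List α} :
    t ∈ (M.onTriples N).evalFrom {s} (w.map .terminal) ↔ t ∈ M.evalFrom {s} w := by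
  induction w generalizing s with
  | nil => rfl
  | cons a w ih => simp only [List.map_cons, mem_evalFrom_singleton_cons, ih]; rfl

theorem NFA.mem_onTriples_evalFrom_nonterminal {M : NFA α σ} {s t p q : σ} {A : N} :
    t ∈ (M.onTriples N).evalFrom {s} [.nonterminal (p, A, q)] ↔ s = p ∧ t = q := by
  simp only [mem_evalFrom_singleton_cons, mem_evalFrom_singleton_nil]
  exact ⟨fun ⟨_, ⟨hs, hm⟩, ht⟩ => ⟨hs, ht.trans hm⟩, fun ⟨hs, ht⟩ => ⟨q, ⟨hs, rfl⟩, ht⟩⟩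

end Triples

namespace ContextFreeGrammar

variable {α : Type*} {σ : Type}

def tripleRules (g : ContextFreeGrammar α) (M : NFA α σ) :
    Set (ContextFreeRule α (σ × g.NT × σ)) :=
  {r | ∃ r₀ ∈ g.rules, r.input.2.1 = r₀.input ∧ r.output.map Symbol.eraseStates = r₀.output ∧
    r.input.2.2 ∈ (M.onTriples g.NT).evalFrom {r.input.1} r.output}

theorem finite_tripleRules [Finite σ] (g : ContextFreeGrammar α) (M : NFA α σ) :
    (g.tripleRules M).Finite := by
  refine (g.rules.finite_toSet.biUnion fun r₀ _ => (Set.finite_univ (α := σ × σ)).image2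
    (fun pq o => ContextFreeRule.mk (pq.1, r₀.input, pq.2) o)
    (List.finite_setOf_map_eq Symbol.finite_eraseStates_preimage r₀.output)).subset ?_
  rintro ⟨⟨p, A, q⟩, o⟩ ⟨r₀, hr₀, rfl, ho, -⟩
  exact Set.mem_biUnion hr₀ ⟨(p, q), trivial, o, ho, rfl⟩

noncomputable abbrev prodNFA [Finite σ] (g : ContextFreeGrammar α) (M : NFA α σ) (s t : σ) :
    ContextFreeGrammar α where
  NT := σ × g.NT × σ
  initial := (s, g.initial, t)
  rules := (g.finite_tripleRules M).toFinset

variable [Finite σ] {g : ContextFreeGrammar α} {M : NFA α σ} {s t : σ}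
  {u v : List (Symbol α (σ × g.NT × σ))}

theorem mem_prodNFA_rules {r : ContextFreeRule α (σ × g.NT × σ)} :
    r ∈ (g.prodNFA M s t).rules ↔ r ∈ g.tripleRules M :=
  Set.Finite.mem_toFinset _

theorem Produces.eraseStates (h : (g.prodNFA M s t).Produces u v) :
    g.Produces (u.map Symbol.eraseStates) (v.map Symbol.eraseStates) := by
  obtain ⟨⟨⟨p, A, q⟩, o⟩, hr, hrw⟩ := h
  obtain ⟨r₀, hr₀, rfl, ho, -⟩ := mem_prodNFA_rules.mp hr
  obtain ⟨x, y, rfl, rfl⟩ := hrw.exists_parts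
  refine ⟨r₀, hr₀, ?_⟩
  simpa [Symbol.eraseStates, ho] using
    r₀.rewrites_of_exists_parts (x.map Symbol.eraseStates) (y.map Symbol.eraseStates)

theorem Derives.eraseStates (h : (g.prodNFA M s t).Derives u v) :
    g.Derives (u.map Symbol.eraseStates) (v.map Symbol.eraseStates) := by
  induction h with
  | refl => exact Derives.refl _
  | tail _ hp ih => exact ih.trans_produces hp.eraseStates

theorem Produces.mem_evalFrom (h : (g.prodNFA M s t).Produces u v) {p q : σ}
    (hq : q ∈ (M.onTriples g.NT).evalFrom {p} u) : q ∈ (M.onTriples g.NT).evalFrom {p} v := by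
  obtain ⟨⟨⟨p', A, q'⟩, o⟩, hr, hrw⟩ := h
  obtain ⟨-, -, -, -, ho⟩ := mem_prodNFA_rules.mp hr
  obtain ⟨x, y, rfl, rfl⟩ := hrw.exists_parts
  simp only [NFA.mem_evalFrom_singleton_append, NFA.mem_onTriples_evalFrom_nonterminal] at hq ⊢
  obtain ⟨m, ⟨m', hm', rfl, rfl⟩, hq⟩ := hq
  exact ⟨m, ⟨m', hm', ho⟩, hq⟩

theorem Derives.mem_evalFrom (h : (g.prodNFA M s t).Derives u v) {p q : σ}
    (hq : q ∈ (M.onTriples g.NT).evalFrom {p} u) : q ∈ (M.onTriples g.NT).evalFrom {p} v := by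
  induction h with
  | refl => exact hq
  | tail _ hp ih => exact hp.mem_evalFrom ih

/- Induct from the end of the derivation: in a decorated form, the states of `M` before and after
the segment produced by the last step decorate the nonterminal that step expanded. -/
theorem Derives.exists_prodNFA_derives {u₀ v₀ : List (Symbol α g.NT)} (h : g.Derives u₀ v₀)
    (hv : v.map Symbol.eraseStates = v₀) {p q : σ}
    (hq : q ∈ (M.onTriples g.NT).evalFrom {p} v) :
    ∃ u, u.map Symbol.eraseStates = u₀ ∧ q ∈ (M.onTriples g.NT).evalFrom {p} u ∧
      (g.prodNFA M s t).Derives u v := by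
  induction h generalizing v with
  | refl => exact ⟨v, hv, hq, Derives.refl _⟩
  | tail _ hp ih =>
    obtain ⟨r₀, hr₀, hrw⟩ := hp
    obtain ⟨x, y, rfl, rfl⟩ := hrw.exists_parts
    obtain ⟨xo', y', rfl, hxo', rfl⟩ := List.map_eq_append_iff.mp hv
    obtain ⟨x', o', rfl, rfl, ho'⟩ := List.map_eq_append_iff.mp hxo'
    simp only [NFA.mem_evalFrom_singleton_append] at hq
    obtain ⟨m', ⟨m, hm, hm'⟩, hq⟩ := hq
    have hrule : (⟨(m, r₀.input, m'), o'⟩ : ContextFreeRule α _) ∈ (g.prodNFA M s t).rules :=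
      mem_prodNFA_rules.mpr ⟨r₀, hr₀, rfl, ho', hm'⟩
    obtain ⟨u, hu, hqu, hder⟩ := ih (v := x' ++ [.nonterminal (m, r₀.input, m')] ++ y')
      (by simp [Symbol.eraseStates])
      (by simpa only [NFA.mem_evalFrom_singleton_append, NFA.mem_onTriples_evalFrom_nonterminal]
        using ⟨m', ⟨m, hm, rfl, rfl⟩, hq⟩)
    exact ⟨u, hu, hqu,
      hder.trans_produces ⟨_, hrule, ContextFreeRule.rewrites_of_exists_parts _ x' y'⟩⟩

theorem mem_prodNFA_language_iff {w : List α} :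
    w ∈ (g.prodNFA M s t).language ↔ w ∈ g.language ∧ t ∈ M.evalFrom {s} w := by
  rw [mem_language_iff, mem_language_iff, ← NFA.mem_onTriples_evalFrom_map_terminal (N := g.NT)]
  constructor
  · intro hw
    refine ⟨by simpa [Symbol.eraseStates, Function.comp_def] using hw.eraseStates, ?_⟩
    exact hw.mem_evalFrom (NFA.mem_onTriples_evalFrom_nonterminal.mpr ⟨rfl, rfl⟩)
  · rintro ⟨hw, hst⟩
    obtain ⟨u, hu, hqu, hder⟩ := hw.exists_prodNFA_derives (M := M) (s := s) (t := t)
      (v := w.map .terminal) (by simp [Symbol.eraseStates, Function.comp_def]) hst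
    obtain ⟨_, l, rfl, ha, hl⟩ := List.map_eq_cons_iff.mp hu
    obtain ⟨p, q, rfl⟩ := Symbol.eraseStates_eq_nonterminal_iff.mp ha
    obtain rfl := List.map_eq_nil_iff.mp hl
    obtain ⟨rfl, rfl⟩ := NFA.mem_onTriples_evalFrom_nonterminal.mp hqu
    exact hder

end ContextFreeGrammar

/-- The life cycle of a single variable: unopened (`0`), open (`1`), closed (`2`). -/
def varCycle : NFA Bool (Fin 3) where
  step s b := {s' | s = 0 ∧ b = true ∧ s' = 1 ∨ s = 1 ∧ b = false ∧ s' = 2}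
  start := {0}
  accept := {2}

theorem two_mem_varCycle_evalFrom_zero_iff {l : List Bool} :
    2 ∈ varCycle.evalFrom {0} l ↔ l = [true, false] := by
  rcases l with _ | ⟨_ | _, _ | ⟨_ | _, _ | ⟨b, l⟩⟩⟩ <;>
    simp [NFA.evalFrom_empty, varCycle]

section Validity

variable {T X : Type} [DecidableEq X]

def opOf (x : X) : T ⊕ VarOp X → Option Bool
  | .inl _ => none
  | .inr (y, b) => if y = x then some b else none

theorem opOf_eq_some_iff {x : X} {c : T ⊕ VarOp X} {b : Bool} :
    opOf x c = some b ↔ c = .inr (x, b) := by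
  rcases c with t | ⟨y, b'⟩ <;> simp [opOf, eq_comm]

theorem forall_opOf_eq_none_iff {x : X} {u : RefWord T X} :
    (∀ c ∈ u, opOf x c = none) ↔ ∀ b, .inr (x, b) ∉ u := by
  simp only [Option.eq_none_iff_forall_ne_some, ne_eq, opOf_eq_some_iff]
  exact ⟨fun h b hb => h _ hb b rfl, fun h c hc b hcb => h b (hcb ▸ hc)⟩

theorem validRef_iff_filterMap_opOf {r : RefWord T X} :
    ValidRef r ↔ ∀ x, r.filterMap (opOf x) = [true, false] := by
  refine forall_congr' fun x => ?_
  simp only [List.filterMap_eq_cons_iff, List.filterMap_eq_nil_iff, opOf_eq_some_iff,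
    forall_opOf_eq_none_iff]
  constructor
  · rintro ⟨u, v, w, rfl, h⟩
    exact ⟨u, _, _, rfl, fun b => (h b).1, rfl, v, _, w, rfl, fun b => (h b).2.1, rfl,
      fun b => (h b).2.2⟩
  · rintro ⟨u, _, _, rfl, hu, rfl, v, _, w, rfl, hv, rfl, hw⟩
    exact ⟨u, v, w, rfl, fun b => ⟨hu b, hv b, hw b⟩⟩

variable (T X) in
def validityNFA : NFA (T ⊕ VarOp X) (X → Fin 3) :=
  NFA.pi fun x => varCycle.comapOption (opOf x)

theorem validRef_iff_mem_validityNFA_evalFrom {r : RefWord T X} :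
    ValidRef r ↔ (fun _ => 2) ∈ (validityNFA T X).evalFrom {fun _ => 0} r := by
  simp only [validRef_iff_filterMap_opOf, validityNFA, NFA.mem_pi_evalFrom_singleton,
    NFA.mem_comapOption_evalFrom_singleton, two_mem_varCycle_evalFrom_zero_iff]

end Validity

theorem stmt11_general (T X : Type) [Fintype X] (k : ℕ) (hk : Fintype.card X = k)
    (G : ContextFreeGrammar.{0} (T ⊕ VarOp X)) :
    ∃ G' : ContextFreeGrammar.{0} (T ⊕ VarOp X),
      (∀ r : RefWord T X, r ∈ G'.language → ValidRef r) ∧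
      (∀ d : List T, spanner G' d = spanner G d) ∧
      (InCNF G → Nat.card G'.NT ≤ 3 ^ (2 * k) * Nat.card G.NT) := by
  classical
  refine ⟨G.prodNFA (validityNFA T X) (fun _ => 0) (fun _ => 2), fun r hr => ?_, fun d => ?_,
    fun _ => ?_⟩
  · exact validRef_iff_mem_validityNFA_evalFrom.mpr
      (ContextFreeGrammar.mem_prodNFA_language_iff.mp hr).2
  · ext μ
    simp only [spanner, Set.mem_ofPred_eq, ContextFreeGrammar.mem_prodNFA_language_iff,
      ← validRef_iff_mem_validityNFA_evalFrom, and_assoc, and_self_left]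
  · simp only [Nat.card_prod, Nat.card_eq_fintype_card, Fintype.card_fun, Fintype.card_fin, hk]
    exact le_of_eq (by ring)

/-- Every extraction grammar can be converted to an equivalent functional one (every generated
ref-word is valid); if the original is in CNF, the functional grammar can be taken with at most
`3^(2k) · |V|` nonterminals. -/
theorem stmt11 (T X : Type) [Fintype X] (k : ℕ) (hk : Fintype.card X = k)
    (G : ContextFreeGrammar.{0} (T ⊕ VarOp X)) (hfin : Finite G.NT) :
    ∃ G' : ContextFreeGrammar.{0} (T ⊕ VarOp X),
      (∀ r : RefWord T X, r ∈ G'.language → ValidRef r) ∧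
      (∀ d : List T, spanner G' d = spanner G d) ∧
      (InCNF G → Nat.card G'.NT ≤ 3 ^ (2 * k) * Nat.card G.NT) :=
  stmt11_general T X k hk G
end

section
/- Let G be a functional extraction grammar in which every nonterminal is useful. Then for every nonterminal A of G there exists a set 𝐱_A ⊆ Γ_X of variable operations such that for every ref-word r with A ⇒* r, the set of variable operations occurring in r is exactly 𝐱_A. -/
/-!
Fix a nonterminal `A`. Usefulness gives a sentential form `α A β` derivable from the start symbol
and deriving a terminal word, so `α` and `β` derive terminal ref-words `u` and `v`. Then
`u r v ∈ L(G)` for every ref-word `r` derived from `A`, and by functionality `u r v` contains each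
variable operation exactly once. Hence a variable operation occurs in `r` iff it occurs in neither
`u` nor `v`, a condition independent of `r`.
-/

namespace ContextFreeRule

variable {T N : Type*} {r : ContextFreeRule T N}

lemma Rewrites.append_split {p q v : List (Symbol T N)} (h : r.Rewrites (p ++ q) v) :
    (∃ p', r.Rewrites p p' ∧ v = p' ++ q) ∨ ∃ q', r.Rewrites q q' ∧ v = p ++ q' := by
  induction p generalizing v with
  | nil => exact Or.inr ⟨v, h, rfl⟩
  | cons a p ih =>
    cases h with
    | head s => exact Or.inl ⟨r.output ++ p, Rewrites.head p, by simp⟩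
    | cons _ h =>
      rcases ih h with ⟨p', hp, rfl⟩ | ⟨q', hq, rfl⟩
      · exact Or.inl ⟨a :: p', hp.cons a, rfl⟩
      · exact Or.inr ⟨q', hq, rfl⟩

end ContextFreeRule

namespace ContextFreeGrammar

variable {T : Type*} {g : ContextFreeGrammar T}

lemma Produces.append_split {p q v : List (Symbol T g.NT)} (h : g.Produces (p ++ q) v) :
    (∃ p', g.Produces p p' ∧ v = p' ++ q) ∨ ∃ q', g.Produces q q' ∧ v = p ++ q' := by
  obtain ⟨r, hr, hrw⟩ := h
  rcases hrw.append_split with ⟨p', hp, rfl⟩ | ⟨q', hq, rfl⟩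
  · exact Or.inl ⟨p', ⟨r, hr, hp⟩, rfl⟩
  · exact Or.inr ⟨q', ⟨r, hr, hq⟩, rfl⟩

lemma Derives.append {p p' q q' : List (Symbol T g.NT)} (hp : g.Derives p p')
    (hq : g.Derives q q') : g.Derives (p ++ q) (p' ++ q') :=
  (hp.append_right q).trans (hq.append_left p')

lemma Derives.append_split {p q w : List (Symbol T g.NT)} (h : g.Derives (p ++ q) w) :
    ∃ w₁ w₂, w = w₁ ++ w₂ ∧ g.Derives p w₁ ∧ g.Derives q w₂ := by
  induction h with
  | refl => exact ⟨p, q, rfl, Derives.refl p, Derives.refl q⟩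
  | tail _ hprod ih =>
    obtain ⟨w₁, w₂, rfl, h₁, h₂⟩ := ih
    rcases hprod.append_split with ⟨w₁', h, rfl⟩ | ⟨w₂', h, rfl⟩
    · exact ⟨w₁', w₂, rfl, h₁.trans_produces h, h₂⟩
    · exact ⟨w₁, w₂', rfl, h₁, h₂.trans_produces h⟩

lemma Derives.append_split_terminal {p q : List (Symbol T g.NT)} {w : List T}
    (h : g.Derives (p ++ q) (w.map Symbol.terminal)) :
    ∃ u v, w = u ++ v ∧ g.Derives p (u.map Symbol.terminal) ∧
      g.Derives q (v.map Symbol.terminal) := by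
  obtain ⟨w₁, w₂, hw, h₁, h₂⟩ := h.append_split
  obtain ⟨u, v, rfl, rfl, rfl⟩ := List.map_eq_append_iff.mp hw
  exact ⟨u, v, rfl, h₁, h₂⟩

def IsUseful (g : ContextFreeGrammar T) (A : g.NT) : Prop :=
  ∃ (α β : List (Symbol T g.NT)) (w : List T),
    g.Derives [Symbol.nonterminal g.initial] (α ++ Symbol.nonterminal A :: β) ∧
    g.Derives (α ++ Symbol.nonterminal A :: β) (w.map Symbol.terminal)

lemma IsUseful.exists_context {A : g.NT} (hA : g.IsUseful A) :
    ∃ u v : List T, ∀ r : List T, g.Derives [Symbol.nonterminal A] (r.map Symbol.terminal) →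
      u ++ r ++ v ∈ g.language := by
  obtain ⟨α, β, w, hstart, hterm⟩ := hA
  obtain ⟨u, _, -, hα, hAβ⟩ := hterm.append_split_terminal
  obtain ⟨_, v, -, -, hβ⟩ := Derives.append_split_terminal (p := [_]) hAβ
  refine ⟨u, v, fun r hr => ?_⟩
  rw [mem_language_iff, List.map_append, List.map_append, List.append_assoc]
  exact hstart.trans (hα.append (hr.append hβ))

end ContextFreeGrammar

lemma List.mem_middle_iff_of_count_eq_one {α : Type*} [DecidableEq α] {a : α}
    {l₁ l₂ l₃ : List α} (h : (l₁ ++ l₂ ++ l₃).count a = 1) :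
    a ∈ l₂ ↔ a ∉ l₁ ∧ a ∉ l₃ := by
  rw [List.count_append, List.count_append] at h
  rw [← List.count_pos_iff, ← List.count_eq_zero, ← List.count_eq_zero]
  omega

lemma ValidRef.count_eq_one {T X : Type} [DecidableEq (T ⊕ VarOp X)] {r : RefWord T X}
    (h : ValidRef r) (γ : VarOp X) : r.count (Sum.inr γ) = 1 := by
  obtain ⟨x, b⟩ := γ
  obtain ⟨u, v, w, rfl, hnot⟩ := h x
  obtain ⟨hu, hv, hw⟩ := hnot b
  cases b <;> simp [List.count_append, List.count_eq_zero.mpr, hu, hv, hw]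

lemma ValidRef.mem_middle_iff {T X : Type} {u r v : RefWord T X} (h : ValidRef (u ++ r ++ v))
    (γ : VarOp X) : Sum.inr γ ∈ r ↔ Sum.inr γ ∉ u ∧ Sum.inr γ ∉ v := by
  classical
  exact List.mem_middle_iff_of_count_eq_one (h.count_eq_one γ)

/-- In a functional extraction grammar all of whose nonterminals are useful, each nonterminal `A`
determines a fixed set `𝐱_A` of variable operations: every terminal ref-word derivable from `A`
contains exactly the variable operations in `𝐱_A`. -/
theorem stmt12 (T X : Type) (G : ContextFreeGrammar.{0} (T ⊕ VarOp X))
    (hfunc : ∀ r : RefWord T X, r ∈ G.language → ValidRef r)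
    (huseful : ∀ A : G.NT, ∃ (α β : List (Symbol (T ⊕ VarOp X) G.NT)) (w : RefWord T X),
        G.Derives [Symbol.nonterminal G.initial] (α ++ Symbol.nonterminal A :: β) ∧
        G.Derives (α ++ Symbol.nonterminal A :: β) (w.map Symbol.terminal)) :
    ∀ A : G.NT, ∃ xA : Set (VarOp X),
      ∀ r : RefWord T X,
        G.Derives [Symbol.nonterminal A] (r.map Symbol.terminal) →
        {γ : VarOp X | Sum.inr γ ∈ r} = xA := by
  intro A
  obtain ⟨u, v, hcontext⟩ := ContextFreeGrammar.IsUseful.exists_context (huseful A)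
  refine ⟨{γ | Sum.inr γ ∉ u ∧ Sum.inr γ ∉ v}, fun r hr => ?_⟩
  ext γ
  exact (hfunc _ (hcontext r hr)).mem_middle_iff γ
end

section
/- With G and G_d as above, additionally for every nonterminal A of G and every ref-word r consisting only of variable operations (clr(r) = ε): A ⇒*_G r if and only if A_ε ⇒*_{G_d} r. Consequently, the set of valid ref-words of G that clr-map to d equals the language generated by G_d from its start symbol S_{1,n}, intersected with the valid ref-words. -/
open Classical in
/-- The document-adjusted variants of a single CNF rule: `A_{i,i} → σ_i`, `A_ε → τ`,
`A_ε → B_ε C_ε`, `A_{i,j} → B_{i,j} C_ε`, `A_{i,j} → B_ε C_{i,j}`, and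
`A_{i,j} → B_{i,i'} C_{i'+1,j}`.  The nonterminal `A_{i,j}` is encoded as `(A, some (i,j))`
and `A_ε` as `(A, none)`. -/
noncomputable def adjustRule {T X : Type} (d : List T) (N : Type)
    (r : ContextFreeRule (T ⊕ VarOp X) N) :
    List (ContextFreeRule (T ⊕ VarOp X) (N × Option (ℕ × ℕ))) :=
  match r.output with
  | [Symbol.terminal (Sum.inl σ)] =>
      (List.range d.length).filterMap fun i0 =>
        if d[i0]? = some σ then
          some ⟨(r.input, some (i0 + 1, i0 + 1)), [Symbol.terminal (Sum.inl σ)]⟩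
        else none
  | [Symbol.terminal (Sum.inr τ)] =>
      [⟨(r.input, none), [Symbol.terminal (Sum.inr τ)]⟩]
  | [Symbol.nonterminal B, Symbol.nonterminal C] =>
      ⟨(r.input, none), [Symbol.nonterminal (B, none), Symbol.nonterminal (C, none)]⟩ ::
      (List.range d.length).flatMap fun i0 =>
        (List.range d.length).flatMap fun j0 =>
          if i0 ≤ j0 then
            ⟨(r.input, some (i0 + 1, j0 + 1)),
                [Symbol.nonterminal (B, some (i0 + 1, j0 + 1)), Symbol.nonterminal (C, none)]⟩ ::
            ⟨(r.input, some (i0 + 1, j0 + 1)),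
                [Symbol.nonterminal (B, none), Symbol.nonterminal (C, some (i0 + 1, j0 + 1))]⟩ ::
            ((List.range d.length).filterMap fun i' =>
              if i0 ≤ i' ∧ i' < j0 then
                some ⟨(r.input, some (i0 + 1, j0 + 1)),
                  [Symbol.nonterminal (B, some (i0 + 1, i' + 1)),
                   Symbol.nonterminal (C, some (i' + 2, j0 + 1))]⟩
              else none)
          else []
  | _ => []

open Classical in
/-- The grammar `G_d` obtained by adjusting the CNF extraction grammar `G` to the document `d`. -/
noncomputable def adjust {T X : Type} (G : ContextFreeGrammar.{0} (T ⊕ VarOp X)) (d : List T) :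
    ContextFreeGrammar.{0} (T ⊕ VarOp X) where
  NT := G.NT × Option (ℕ × ℕ)
  initial := (G.initial, some (1, d.length))
  rules := (G.rules.toList.flatMap (adjustRule d G.NT)).toFinset


/-! The label `o` of an adjusted nonterminal `(A, o)` pins down the letters of `d` spelled by the
words it derives: none for `A_ε`, the factor `σ_i ⋯ σ_j` for `A_{i,j}`. Both `G` and `G_d` are in
Chomsky normal form, so a derivation from one nonterminal is a terminal rule or a binary rule
followed by derivations of two nonempty halves, and the rules of `G_d` are exactly those of `G`
decorated with labels that split a factor into its two halves. Induction on the length of the word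
therefore gives `(A, o) ⇒*_{G_d} w ↔ A ⇒*_G w ∧ LabelFits d o (clr w)`, and the theorem is the
case of the labels `none` and `some (1, n)`. -/

namespace ContextFreeRule

variable {T N : Type*} {r : ContextFreeRule T N}

lemma Rewrites.append_cases :
    ∀ {u v s : List (Symbol T N)}, r.Rewrites (u ++ v) s →
      (∃ u', r.Rewrites u u' ∧ s = u' ++ v) ∨ (∃ v', r.Rewrites v v' ∧ s = u ++ v')
  | [], _, s, h => Or.inr ⟨s, h, rfl⟩
  | _ :: u, _, _, .head _ => Or.inl ⟨r.output ++ u, .head u, by simp⟩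
  | x :: _, _, _, .cons _ h => by
    rcases h.append_cases with ⟨u', hu, rfl⟩ | ⟨v', hv, rfl⟩
    · exact Or.inl ⟨x :: u', hu.cons x, rfl⟩
    · exact Or.inr ⟨v', hv, rfl⟩

end ContextFreeRule

namespace ContextFreeGrammar

variable {T : Type*} {g : ContextFreeGrammar T}

lemma Derives.eq_of_map_terminal {w : List T} {v : List (Symbol T g.NT)}
    (h : g.Derives (w.map Symbol.terminal) v) : v = w.map Symbol.terminal := by
  rcases h.eq_or_head with rfl | ⟨_, ⟨r, -, hr⟩, -⟩
  · rfl
  · simpa using hr.nonterminal_input_mem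

lemma Derives.split_append {w : List T} {u v : List (Symbol T g.NT)}
    (h : g.Derives (u ++ v) (w.map Symbol.terminal)) :
    ∃ w₁ w₂, w = w₁ ++ w₂ ∧ g.Derives u (w₁.map Symbol.terminal) ∧
      g.Derives v (w₂.map Symbol.terminal) := by
  generalize huv : u ++ v = s at h
  induction h using Relation.ReflTransGen.head_induction_on generalizing u v with
  | refl =>
    obtain ⟨w₁, w₂, rfl, rfl, rfl⟩ := List.map_eq_append_iff.mp huv.symm
    exact ⟨w₁, w₂, rfl, .refl _, .refl _⟩
  | head hp _ ih =>
    obtain ⟨r, hr, hrw⟩ := hp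
    rcases (huv ▸ hrw).append_cases with ⟨u', hu, rfl⟩ | ⟨v', hv, rfl⟩
    · obtain ⟨w₁, w₂, rfl, h₁, h₂⟩ := ih rfl
      exact ⟨w₁, w₂, rfl, Produces.trans_derives ⟨r, hr, hu⟩ h₁, h₂⟩
    · obtain ⟨w₁, w₂, rfl, h₁, h₂⟩ := ih rfl
      exact ⟨w₁, w₂, rfl, h₁, Produces.trans_derives ⟨r, hr, hv⟩ h₂⟩

lemma derives_of_mem_rules {A : g.NT} {s : List (Symbol T g.NT)} (h : ⟨A, s⟩ ∈ g.rules) :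
    g.Derives [Symbol.nonterminal A] s :=
  Produces.single ⟨_, h, ContextFreeRule.Rewrites.input_output⟩

end ContextFreeGrammar

namespace InCNF

open ContextFreeGrammar

variable {U : Type} {g : ContextFreeGrammar U}

lemma derives_ne_nil (hg : InCNF g) {s v : List (Symbol U g.NT)} (h : g.Derives s v)
    (hs : s ≠ []) : v ≠ [] := by
  induction h with
  | refl => exact hs
  | tail _ hp _ =>
    obtain ⟨r, hr, hrw⟩ := hp
    obtain ⟨p, q, -, rfl⟩ := hrw.exists_parts
    rcases hg r hr with ⟨B, C, hout⟩ | ⟨a, hout⟩ <;> simp [hout]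

theorem derives_iff (hg : InCNF g) {A : g.NT} {w : List U} :
    g.Derives [Symbol.nonterminal A] (w.map Symbol.terminal) ↔
      (∃ a, ⟨A, [Symbol.terminal a]⟩ ∈ g.rules ∧ w = [a]) ∨
      ∃ B C w₁ w₂, ⟨A, [Symbol.nonterminal B, Symbol.nonterminal C]⟩ ∈ g.rules ∧
        w = w₁ ++ w₂ ∧ w₁ ≠ [] ∧ w₂ ≠ [] ∧
        g.Derives [Symbol.nonterminal B] (w₁.map Symbol.terminal) ∧
        g.Derives [Symbol.nonterminal C] (w₂.map Symbol.terminal) := by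
  constructor
  · intro h
    rcases h.eq_or_head with h | ⟨_, ⟨r, hr, hrw⟩, hder⟩
    · cases w <;> simp at h
    -- a rewrite of the one-letter string `[A]` happens at its head
    rcases hrw with _ | ⟨_, ⟨⟩⟩
    rw [List.append_nil] at hder
    rcases hg _ hr with ⟨B, C, hout⟩ | ⟨a, hout⟩
    · obtain ⟨w₁, w₂, rfl, h₁, h₂⟩ := (hout ▸ hder).split_append (u := [_]) (v := [_])
      refine Or.inr ⟨B, C, w₁, w₂, hout ▸ hr, rfl, ?_, ?_, h₁, h₂⟩
      · simpa using hg.derives_ne_nil h₁ (List.cons_ne_nil _ _)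
      · simpa using hg.derives_ne_nil h₂ (List.cons_ne_nil _ _)
    · have hder : g.Derives ([a].map Symbol.terminal) (w.map Symbol.terminal) := by
        rwa [hout] at hder
      obtain ⟨b, rfl, hb⟩ := List.map_eq_singleton_iff.mp hder.eq_of_map_terminal
      cases hb
      exact Or.inl ⟨_, hout ▸ hr, rfl⟩
  · rintro (⟨a, hr, rfl⟩ | ⟨B, C, w₁, w₂, hr, rfl, -, -, h₁, h₂⟩)
    · exact derives_of_mem_rules hr
    · rw [List.map_append]
      exact (derives_of_mem_rules hr).trans <|
        (h₁.append_right _).trans (h₂.append_left (w₁.map Symbol.terminal))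

end InCNF

lemma List.drop_take_append_drop_take {α : Type*} (l : List α) {a b c : ℕ} (hab : a ≤ b)
    (hbc : b ≤ c) : (l.take b).drop a ++ (l.take c).drop b = (l.take c).drop a := by
  rw [← min_eq_left hbc, ← List.take_take, List.drop_take, min_eq_left hbc]
  simpa [Nat.add_sub_cancel' hab] using List.drop_take_append_drop (l.take c) a (b - a)

lemma List.length_drop_take_of_le {α : Type*} {l : List α} {i j : ℕ} (hj : j ≤ l.length) :
    ((l.take j).drop i).length = j - i := by
  simp [hj]

section Labels

variable {T : Type*} {d : List T}

/-- `LabelFits d o u`: the label `o = none` of `A_ε` admits only `u = ε`, and the label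
`o = some (i, j)` of `A_{i,j}` only the factor `u = σ_i ⋯ σ_j` of `d` (1-based positions). -/
def LabelFits (d : List T) : Option (ℕ × ℕ) → List T → Prop
  | none, u => u = []
  | some (i, j), u => 1 ≤ i ∧ i ≤ j ∧ j ≤ d.length ∧ u = (d.take j).drop (i - 1)

def LabelSplit (n : ℕ) : Option (ℕ × ℕ) → Option (ℕ × ℕ) → Option (ℕ × ℕ) → Prop
  | none, p, q => p = none ∧ q = none
  | some (i, j), p, q => 1 ≤ i ∧ i ≤ j ∧ j ≤ n ∧
      (p = some (i, j) ∧ q = none ∨ p = none ∧ q = some (i, j) ∨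
        ∃ k, i ≤ k ∧ k < j ∧ p = some (i, k) ∧ q = some (k + 1, j))

@[simp] lemma labelFits_none {u : List T} : LabelFits d none u ↔ u = [] := Iff.rfl

@[simp] lemma labelFits_nil {o : Option (ℕ × ℕ)} : LabelFits d o [] ↔ o = none := by
  refine ⟨fun h => ?_, by rintro rfl; rfl⟩
  rcases o with _ | ⟨i, j⟩
  · rfl
  · obtain ⟨hi, hij, hj, h⟩ := h
    have := List.length_drop_take_of_le (i := i - 1) hj
    rw [← h] at this
    simp at this
    omega

lemma labelFits_singleton {o : Option (ℕ × ℕ)} {σ : T} :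
    LabelFits d o [σ] ↔ ∃ i < d.length, d[i]? = some σ ∧ o = some (i + 1, i + 1) := by
  have key {k : ℕ} (hk : k < d.length) : [σ] = (d.take (k + 1)).drop k ↔ d[k]? = some σ := by
    rw [List.drop_take, Nat.add_sub_cancel_left, List.drop_eq_getElem_cons hk, List.take_one]
    simp [hk, eq_comm]
  constructor
  · rcases o with _ | ⟨i, j⟩
    · simp
    · rintro ⟨hi, hij, hj, h⟩
      have hlen := List.length_drop_take_of_le (i := i - 1) hj
      rw [← h] at hlen
      obtain ⟨k, rfl⟩ : ∃ k, i = k + 1 := ⟨i - 1, by omega⟩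
      obtain rfl : j = k + 1 := by simp at hlen; omega
      exact ⟨k, by omega, (key (by omega)).1 h, rfl⟩
  · rintro ⟨k, hk, hσ, rfl⟩
    exact ⟨le_add_self, le_rfl, hk, (key hk).2 hσ⟩

lemma labelFits_append {o : Option (ℕ × ℕ)} {u v : List T} :
    LabelFits d o (u ++ v) ↔
      ∃ p q, LabelSplit d.length o p q ∧ LabelFits d p u ∧ LabelFits d q v := by
  constructor
  · rcases o with _ | ⟨i, j⟩
    · intro h
      obtain ⟨rfl, rfl⟩ := List.append_eq_nil_iff.mp h
      exact ⟨none, none, ⟨rfl, rfl⟩, rfl, rfl⟩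
    rintro ⟨hi, hij, hj, h⟩
    by_cases hu : u = []
    · subst hu
      exact ⟨none, some (i, j), ⟨hi, hij, hj, .inr (.inl ⟨rfl, rfl⟩)⟩, rfl, hi, hij, hj, h⟩
    by_cases hv : v = []
    · subst hv
      refine ⟨some (i, j), none, ⟨hi, hij, hj, .inl ⟨rfl, rfl⟩⟩, ⟨hi, hij, hj, ?_⟩, rfl⟩
      simpa using h
    have hlen := List.length_drop_take_of_le (i := i - 1) hj
    rw [← h, List.length_append] at hlen
    have hu₁ := List.length_pos_iff.mpr hu
    have hv₁ := List.length_pos_iff.mpr hv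
    obtain ⟨k, hk⟩ : ∃ k, k = i - 1 + u.length := ⟨_, rfl⟩
    have hsplit := List.drop_take_append_drop_take d (a := i - 1) (b := k) (c := j)
      (by omega) (by omega)
    rw [← h] at hsplit
    obtain ⟨hu', hv'⟩ := List.append_inj hsplit (by rw [List.length_drop_take_of_le (by omega)]; omega)
    refine ⟨some (i, k), some (k + 1, j), ⟨hi, hij, hj, .inr (.inr ⟨k, ?_, ?_, rfl, rfl⟩)⟩,
      ⟨hi, ?_, ?_, hu'.symm⟩, ⟨?_, ?_, hj, hv'.symm⟩⟩ <;> omega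
  · rintro ⟨p, q, hs, hp, hq⟩
    rcases o with _ | ⟨i, j⟩
    · obtain ⟨rfl, rfl⟩ := hs
      simp_all
    obtain ⟨hi, hij, hj, ⟨rfl, rfl⟩ | ⟨rfl, rfl⟩ | ⟨k, hik, hkj, rfl, rfl⟩⟩ := hs
    · rw [labelFits_none.mp hq, List.append_nil]
      exact hp
    · rw [labelFits_none.mp hp, List.nil_append]
      exact hq
    · obtain ⟨-, -, -, rfl⟩ := hp
      obtain ⟨-, -, -, rfl⟩ := hq
      refine ⟨hi, hij, hj, ?_⟩
      rw [Nat.add_sub_cancel]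
      exact List.drop_take_append_drop_take d (by omega) hkj.le

lemma labelFits_whole (hd : 1 ≤ d.length) {u : List T} :
    LabelFits d (some (1, d.length)) u ↔ u = d := by
  simp [LabelFits, hd]

end Labels

section Adjust

variable {T X : Type}

@[simp] lemma clr_append (u v : RefWord T X) : clr (u ++ v) = clr u ++ clr v :=
  List.filterMap_append

@[simp] lemma clr_singleton_inl (σ : T) : clr ([Sum.inl σ] : RefWord T X) = [σ] := rfl

@[simp] lemma clr_singleton_inr (τ : VarOp X) : clr ([Sum.inr τ] : RefWord T X) = [] := rfl

lemma mem_adjustRule_binary_iff {d : List T} {N : Type} {A B C : N}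
    {r' : ContextFreeRule (T ⊕ VarOp X) (N × Option (ℕ × ℕ))} :
    r' ∈ adjustRule d N ⟨A, [Symbol.nonterminal B, Symbol.nonterminal C]⟩ ↔
      ∃ o p q, LabelSplit d.length o p q ∧
        r' = ⟨(A, o), [Symbol.nonterminal (B, p), Symbol.nonterminal (C, q)]⟩ := by
  simp only [adjustRule, List.mem_cons, List.mem_flatMap, List.mem_range, List.mem_ite_nil_right,
    List.mem_filterMap, Option.ite_none_right_eq_some, Option.some.injEq]
  constructor
  · rintro (rfl | ⟨i, hi, j, hj, hij, rfl | rfl | ⟨k, hk, ⟨hik, hkj⟩, rfl⟩⟩)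
    · exact ⟨none, none, none, ⟨rfl, rfl⟩, rfl⟩
    · exact ⟨some (i + 1, j + 1), some (i + 1, j + 1), none,
        ⟨by omega, by omega, by omega, .inl ⟨rfl, rfl⟩⟩, rfl⟩
    · exact ⟨some (i + 1, j + 1), none, some (i + 1, j + 1),
        ⟨by omega, by omega, by omega, .inr (.inl ⟨rfl, rfl⟩)⟩, rfl⟩
    · exact ⟨some (i + 1, j + 1), some (i + 1, k + 1), some (k + 2, j + 1),
        ⟨by omega, by omega, by omega, .inr (.inr ⟨k + 1, by omega, by omega, rfl, rfl⟩)⟩, rfl⟩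
  · rintro ⟨_ | ⟨i, j⟩, p, q, hs, rfl⟩
    · obtain ⟨rfl, rfl⟩ := hs
      exact .inl rfl
    obtain ⟨hi, hij, hj, hpq⟩ := hs
    obtain ⟨i, rfl⟩ : ∃ i₀, i = i₀ + 1 := ⟨i - 1, by omega⟩
    obtain ⟨j, rfl⟩ : ∃ j₀, j = j₀ + 1 := ⟨j - 1, by omega⟩
    refine .inr ⟨i, by omega, j, by omega, by omega, ?_⟩
    rcases hpq with ⟨rfl, rfl⟩ | ⟨rfl, rfl⟩ | ⟨k, hik, hkj, rfl, rfl⟩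
    · exact .inl rfl
    · exact .inr (.inl rfl)
    · obtain ⟨k, rfl⟩ : ∃ k₀, k = k₀ + 1 := ⟨k - 1, by omega⟩
      exact .inr (.inr ⟨k, by omega, ⟨by omega, by omega⟩, rfl⟩)

lemma mem_adjustRule_iff {d : List T} {N : Type} {r : ContextFreeRule (T ⊕ VarOp X) N}
    {r' : ContextFreeRule (T ⊕ VarOp X) (N × Option (ℕ × ℕ))} :
    r' ∈ adjustRule d N r ↔
      (∃ a o, r.output = [Symbol.terminal a] ∧ LabelFits d o (clr [a]) ∧
        r' = ⟨(r.input, o), [Symbol.terminal a]⟩) ∨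
      ∃ B C o p q, r.output = [Symbol.nonterminal B, Symbol.nonterminal C] ∧
        LabelSplit d.length o p q ∧
        r' = ⟨(r.input, o), [Symbol.nonterminal (B, p), Symbol.nonterminal (C, q)]⟩ := by
  obtain ⟨A, out⟩ := r
  match out with
  | [Symbol.terminal (Sum.inl σ)] =>
    simp [adjustRule, labelFits_singleton, and_assoc, eq_comm]
  | [Symbol.terminal (Sum.inr τ)] =>
    simp [adjustRule]
  | [Symbol.nonterminal B, Symbol.nonterminal C] =>
    simp [mem_adjustRule_binary_iff]
  | [] => simp [adjustRule]
  | [Symbol.nonterminal _] => simp [adjustRule]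
  | [Symbol.terminal _, _] => simp [adjustRule]
  | [_, Symbol.terminal _] => simp [adjustRule]
  | _ :: _ :: _ :: _ => simp [adjustRule]

variable {G : ContextFreeGrammar.{0} (T ⊕ VarOp X)} {d : List T}

lemma mem_adjust_rules {r' : ContextFreeRule (T ⊕ VarOp X) (G.NT × Option (ℕ × ℕ))} :
    r' ∈ (adjust G d).rules ↔ ∃ r ∈ G.rules, r' ∈ adjustRule d G.NT r := by
  classical
  exact List.mem_toFinset.trans (List.mem_flatMap.trans (by simp))

lemma adjust_inCNF : InCNF (adjust G d) := by
  intro r' hr'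
  obtain ⟨r, -, hr'⟩ := mem_adjust_rules.mp hr'
  rcases mem_adjustRule_iff.mp hr' with ⟨a, -, -, -, rfl⟩ | ⟨B, C, -, p, q, -, -, rfl⟩
  · exact .inr ⟨a, rfl⟩
  · exact .inl ⟨(B, p), (C, q), rfl⟩

lemma mem_adjust_rules_terminal {A : G.NT} {o : Option (ℕ × ℕ)} {a : T ⊕ VarOp X} :
    ⟨(A, o), [Symbol.terminal a]⟩ ∈ (adjust G d).rules ↔
      ⟨A, [Symbol.terminal a]⟩ ∈ G.rules ∧ LabelFits d o (clr [a]) := by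
  refine mem_adjust_rules.trans ⟨?_, fun ⟨hr, hfit⟩ => ⟨_, hr, mem_adjustRule_iff.mpr
    (.inl ⟨a, o, rfl, hfit, rfl⟩)⟩⟩
  rintro ⟨⟨A', out⟩, hr, h⟩
  rcases mem_adjustRule_iff.mp h with ⟨_, _, rfl, hfit, ⟨⟩⟩ | ⟨_, _, _, _, _, _, _, ⟨⟩⟩
  exact ⟨hr, hfit⟩

lemma mem_adjust_rules_binary {A B C : G.NT} {o p q : Option (ℕ × ℕ)} :
    ⟨(A, o), [Symbol.nonterminal (B, p), Symbol.nonterminal (C, q)]⟩ ∈ (adjust G d).rules ↔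
      ⟨A, [Symbol.nonterminal B, Symbol.nonterminal C]⟩ ∈ G.rules ∧ LabelSplit d.length o p q := by
  refine mem_adjust_rules.trans ⟨?_, fun ⟨hr, hs⟩ => ⟨_, hr, mem_adjustRule_iff.mpr
    (.inr ⟨B, C, o, p, q, rfl, hs, rfl⟩)⟩⟩
  rintro ⟨⟨A', out⟩, hr, h⟩
  rcases mem_adjustRule_iff.mp h with ⟨_, _, _, _, ⟨⟩⟩ | ⟨_, _, _, _, _, rfl, hs, ⟨⟩⟩
  exact ⟨hr, hs⟩

theorem adjust_derives_iff (hG : InCNF G) {A : G.NT} {o : Option (ℕ × ℕ)} {w : RefWord T X} :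
    (adjust G d).Derives [Symbol.nonterminal (A, o)] (w.map Symbol.terminal) ↔
      G.Derives [Symbol.nonterminal A] (w.map Symbol.terminal) ∧ LabelFits d o (clr w) := by
  induction hn : w.length using Nat.strong_induction_on generalizing w A o with
  | _ n ih =>
  have ih' {B : G.NT} {p : Option (ℕ × ℕ)} {u : RefWord T X} (hu : u.length < w.length) :=
    ih u.length (hn ▸ hu) (A := B) (o := p) rfl
  rw [hG.derives_iff]
  refine (adjust_inCNF.derives_iff (A := (A, o))).trans ⟨?_, ?_⟩
  · rintro (⟨a, hr, rfl⟩ | ⟨⟨B, p⟩, ⟨C, q⟩, w₁, w₂, hr, rfl, hw₁, hw₂, h₁, h₂⟩)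
    · obtain ⟨hr, hfit⟩ := mem_adjust_rules_terminal.mp hr
      exact ⟨.inl ⟨a, hr, rfl⟩, hfit⟩
    · obtain ⟨hr, hs⟩ := mem_adjust_rules_binary.mp hr
      obtain ⟨g₁, f₁⟩ := (ih' (by simp [List.length_pos_iff.mpr hw₂])).mp h₁
      obtain ⟨g₂, f₂⟩ := (ih' (by simp [List.length_pos_iff.mpr hw₁])).mp h₂
      refine ⟨.inr ⟨B, C, w₁, w₂, hr, rfl, hw₁, hw₂, g₁, g₂⟩, ?_⟩
      rw [clr_append, labelFits_append]
      exact ⟨p, q, hs, f₁, f₂⟩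
  · rintro ⟨⟨a, hr, rfl⟩ | ⟨B, C, w₁, w₂, hr, rfl, hw₁, hw₂, g₁, g₂⟩, hfit⟩
    · exact .inl ⟨a, mem_adjust_rules_terminal.mpr ⟨hr, hfit⟩, rfl⟩
    · rw [clr_append, labelFits_append] at hfit
      obtain ⟨p, q, hs, f₁, f₂⟩ := hfit
      exact .inr ⟨(B, p), (C, q), w₁, w₂, mem_adjust_rules_binary.mpr ⟨hr, hs⟩, rfl, hw₁, hw₂,
        (ih' (by simp [List.length_pos_iff.mpr hw₂])).mpr ⟨g₁, f₁⟩,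
        (ih' (by simp [List.length_pos_iff.mpr hw₁])).mpr ⟨g₂, f₂⟩⟩

end Adjust

/-- Additionally, `A ⇒*_G r` for ref-words of only variable operations iff
`A_ε ⇒*_{G_d} r`; consequently the set of valid ref-words of `G` mapping to `d` equals the
language generated by `G_d` (from `S_{1,n}`) intersected with the valid ref-words. -/
theorem stmt15 (T X : Type) (G : ContextFreeGrammar.{0} (T ⊕ VarOp X)) (hCNF : InCNF G)
    (d : List T) (hd : 1 ≤ d.length) :
    (∀ (A : G.NT) (r : RefWord T X), clr r = [] →
      (G.Derives [Symbol.nonterminal A] (r.map Symbol.terminal) ↔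
        (adjust G d).Derives [Symbol.nonterminal (A, (none : Option (ℕ × ℕ)))]
          (r.map Symbol.terminal))) ∧
    {r : RefWord T X | r ∈ G.language ∧ ValidRef r ∧ clr r = d} =
      {r : RefWord T X | r ∈ (adjust G d).language ∧ ValidRef r} := by
  refine ⟨fun A r hr => ?_, Set.ext fun r => ?_⟩
  · exact ((adjust_derives_iff hCNF).trans (and_iff_left (labelFits_none.mpr hr))).symm
  · have hstart : r ∈ (adjust G d).language ↔ r ∈ G.language ∧ clr r = d :=
      (adjust_derives_iff hCNF).trans (and_congr_right' (labelFits_whole hd))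
    simp only [Set.mem_ofPred_eq, hstart]
    tauto
end
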